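/- Conditional escape lower bound via Jensen: let η′₁, η′₂ be independent infinite self-avoiding walks satisfying P(η^∞[0,m]=ζ) = μ^{−m} P(η^∞ escapes ζ) for all finite SAW paths ζ, with c_n ~ A μ^n, and weak convergence of finite SAW to η^∞. Then for every fixed ξ ∈ SAW_k, liminf_{m→∞} P(η′₁ escapes η′₂[0,m] | η′₂[0,k] = ξ) ≥ A^{−1}. The key inequality is: Σ_{ζ ⪰ ξ, |ζ|=m} P(η^∞[0,m]=ζ)² ≥ (Σ_{ζ ⪰ ξ} P(η^∞[0,m]=ζ))² / c_m(ξ), by the Cauchy–Schwarz/Jensen inequality. -/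

import Mathlib

open MeasureTheory Filter Topology

/-- `x` and `y` are nearest neighbours in `ℤ^d`. -/
def IsNbr (d : ℕ) (x y : Fin d → ℤ) : Prop :=
  (∑ j, (x j - y j).natAbs) = 1

/-- Self-avoiding paths of length `n` in `ℤ^d` started at the origin,
encoded as functions `ℕ → ℤ^d` frozen after time `n`. -/
def SAWset (d n : ℕ) : Set (ℕ → Fin d → ℤ) :=
  {ω | ω 0 = 0 ∧ (∀ i < n, IsNbr d (ω (i + 1)) (ω i)) ∧
    (∀ i ≤ n, ∀ j ≤ n, ω i = ω j → i = j) ∧ ∀ i, n ≤ i → ω i = ω n}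

/-- The number `c_n` of `n`-step self-avoiding paths. -/
noncomputable def cSAW (d n : ℕ) : ℕ := Nat.card (SAWset d n)

/-- The cylinder event that a path starts with `ζ` up to time `k`. -/
def startSet (d k : ℕ) (ζ : ℕ → Fin d → ℤ) : Set (ℕ → Fin d → ℤ) :=
  {ω | ∀ i ≤ k, ω i = ζ i}

/-- The event that a path (translated to start at `ζ k`) escapes `ζ`. -/
def escSet (d k : ℕ) (ζ : ℕ → Fin d → ℤ) : Set (ℕ → Fin d → ℤ) :=
  {ω | ∀ i, 1 ≤ i → ∀ j ≤ k, ω i + ζ k ≠ ζ j}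

/-- `c_m(ζ)`: the number of `m`-step self-avoiding paths starting with `ζ`. -/
noncomputable def cExt (d m k : ℕ) (ζ : ℕ → Fin d → ℤ) : ℕ :=
  Nat.card ((SAWset d m ∩ startSet d k ζ : Set (ℕ → Fin d → ℤ)))

/-- Infinite self-avoiding paths started at the origin. -/
def InfSAW (d : ℕ) : Set (ℕ → Fin d → ℤ) :=
  {ω | ω 0 = 0 ∧ (∀ i, IsNbr d (ω (i + 1)) (ω i)) ∧ Function.Injective ω}

/-- The `m`-fold shift `T^m`: `(T^m ω)(i) = ω(m+i) − ω(m)`. -/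
def shiftW (d m : ℕ) (ω : ℕ → Fin d → ℤ) : ℕ → Fin d → ℤ :=
  fun i => ω (m + i) - ω m

/-- The shift operator `T`. -/
def Tsh (d : ℕ) (ω : ℕ → Fin d → ℤ) : ℕ → Fin d → ℤ :=
  fun i => ω (i + 1) - ω 1

/-!
Cutting `η₂` at time `m`, the event `{η₂[0,k] = ξ, η₁ escapes η₂[0,m]}` splits, up to a null set,
over the extensions `ζ ⪰ ξ` into the products `{η₁ escapes ζ} × {η₂[0,m] = ζ}`. The hypothesis on
`P` turns `P(η₁ escapes ζ)` into `μ^m P(η[0,m] = ζ)`, so the conditional probability equals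
`μ^m Σ_ζ P(η[0,m] = ζ)² / P(η[0,k] = ξ)`. As `Σ_ζ P(η[0,m] = ζ) = P(η[0,k] = ξ)`, Cauchy–Schwarz
bounds it below by `μ^m P(η[0,k] = ξ) / c_m(ξ)`, and
`c_m(ξ) ~ P(η[0,k] = ξ) c_m ~ P(η[0,k] = ξ) A μ^m` sends this bound to `A⁻¹`.
-/

lemma IsNbr.natAbs_sub_le_one {d : ℕ} {x y : Fin d → ℤ} (h : IsNbr d x y) (l : Fin d) :
    (x l - y l).natAbs ≤ 1 :=
  h ▸ Finset.single_le_sum (f := fun j => (x j - y j).natAbs) (fun _ _ => Nat.zero_le _)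
    (Finset.mem_univ l)

section Paths

variable {d k m : ℕ} {ξ ζ ω : ℕ → Fin d → ℤ}

lemma natAbs_le_of_mem_SAWset (hω : ω ∈ SAWset d m) (i : ℕ) (l : Fin d) :
    (ω i l).natAbs ≤ m := by
  obtain ⟨h0, hnbr, -, hfrozen⟩ := hω
  have hle : ∀ i ≤ m, (ω i l).natAbs ≤ i := by
    intro i
    induction i with
    | zero => simp [h0]
    | succ i ih =>
      intro hi
      have := (hnbr i hi).natAbs_sub_le_one l
      have := ih (Nat.le_of_succ_le hi)
      omega
  rcases le_total i m with h | h
  · exact (hle i h).trans h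
  · exact hfrozen i h ▸ hle m le_rfl

lemma eq_of_mem_startSet_of_mem_SAWset (hζ : ζ ∈ SAWset d m) (hω : ω ∈ SAWset d m)
    (h : ω ∈ startSet d m ζ) : ω = ζ := by
  funext i
  rcases le_total i m with hi | hi
  · exact h i hi
  · rw [hω.2.2.2 i hi, hζ.2.2.2 i hi, h m le_rfl]

lemma SAWset_finite (d m : ℕ) : (SAWset d m).Finite := by
  let restrict : (ℕ → Fin d → ℤ) → Fin (m + 1) → Fin d → ℤ := fun ω i => ω i
  refine Set.Finite.of_finite_image (f := restrict) ?_ fun ζ hζ ω hω h => ?_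
  · refine (Set.Finite.pi fun _ => Set.Finite.pi fun _ =>
      Set.finite_Icc (-(m : ℤ)) m).subset ?_
    rintro _ ⟨ω, hω, rfl⟩
    simp only [restrict, Set.mem_pi, Set.mem_univ, Set.mem_Icc, forall_const]
    intro i l
    have := natAbs_le_of_mem_SAWset hω i l
    omega
  · exact eq_of_mem_startSet_of_mem_SAWset hω hζ fun i hi => congrFun h ⟨i, Nat.lt_succ_of_le hi⟩

lemma pairwiseDisjoint_startSet (d m : ℕ) : (SAWset d m).PairwiseDisjoint (startSet d m) := by
  refine fun ζ hζ ζ' hζ' hne => Set.disjoint_left.2 fun ω hωζ hωζ' => hne ?_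
  exact eq_of_mem_startSet_of_mem_SAWset hζ' hζ fun i hi => (hωζ i hi).symm.trans (hωζ' i hi)

lemma startSet_subset_startSet (hkm : k ≤ m) (hζ : ζ ∈ startSet d k ξ) :
    startSet d m ζ ⊆ startSet d k ξ :=
  fun _ hω i hi => (hω i (hi.trans hkm)).trans (hζ i hi)

/-- The path `ω` stopped at time `m`, i.e. `ω[0, m]` in the encoding of `SAWset`. -/
def stopAt (m : ℕ) (ω : ℕ → Fin d → ℤ) : ℕ → Fin d → ℤ := fun i => ω (min i m)

lemma stopAt_mem_SAWset (hω : ω ∈ InfSAW d) : stopAt m ω ∈ SAWset d m := by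
  obtain ⟨h0, hnbr, hinj⟩ := hω
  refine ⟨by simpa [stopAt] using h0, fun i hi => ?_, fun i hi j hj h => ?_, fun i hi => ?_⟩
  · simpa [stopAt, min_eq_left (Nat.succ_le_of_lt hi), min_eq_left hi.le] using hnbr i
  · simpa [stopAt, min_eq_left hi, min_eq_left hj] using hinj h
  · simp [stopAt, min_eq_right hi]

lemma mem_startSet_stopAt : ω ∈ startSet d m (stopAt m ω) :=
  fun i hi => by simp [stopAt, min_eq_left hi]

lemma mem_startSet_iff_exists_SAW (hω : ω ∈ InfSAW d) (hkm : k ≤ m) :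
    ω ∈ startSet d k ξ ↔ ∃ ζ ∈ SAWset d m ∩ startSet d k ξ, ω ∈ startSet d m ζ := by
  refine ⟨fun hωξ => ⟨stopAt m ω, ⟨stopAt_mem_SAWset hω, ?_⟩, mem_startSet_stopAt⟩, ?_⟩
  · exact fun i hi => by simpa [stopAt, min_eq_left (hi.trans hkm)] using hωξ i hi
  · rintro ⟨ζ, ⟨-, hζ⟩, hωζ⟩
    exact startSet_subset_startSet hkm hζ hωζ

/-- The event `{η₂[0,k] = ξ, η₁ escapes η₂[0,m]}` for a pair `(η₁, η₂)`. -/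
def escapeEvent (d k m : ℕ) (ξ : ℕ → Fin d → ℤ) : Set ((ℕ → Fin d → ℤ) × (ℕ → Fin d → ℤ)) :=
  {p | p.2 ∈ startSet d k ξ ∧ ∀ i, 1 ≤ i → ∀ j ≤ m, p.1 i + p.2 m ≠ p.2 j}

lemma mem_escapeEvent_iff_exists_SAW {p : (ℕ → Fin d → ℤ) × (ℕ → Fin d → ℤ)}
    (hp : p.2 ∈ InfSAW d) (hkm : k ≤ m) :
    p ∈ escapeEvent d k m ξ ↔
      ∃ ζ ∈ SAWset d m ∩ startSet d k ξ, p.1 ∈ escSet d m ζ ∧ p.2 ∈ startSet d m ζ := by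
  have hesc : ∀ ζ, p.2 ∈ startSet d m ζ →
      (p.1 ∈ escSet d m ζ ↔ ∀ i, 1 ≤ i → ∀ j ≤ m, p.1 i + p.2 m ≠ p.2 j) := by
    intro ζ hζ
    simp only [escSet, Set.mem_ofPred_eq]
    refine forall₄_congr fun i _ j hj => ?_
    rw [hζ m le_rfl, hζ j hj]
  simp only [escapeEvent, Set.mem_ofPred_eq, mem_startSet_iff_exists_SAW hp hkm]
  constructor
  · rintro ⟨⟨ζ, hζ, hpζ⟩, hp1⟩
    exact ⟨ζ, hζ, (hesc ζ hpζ).2 hp1, hpζ⟩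
  · rintro ⟨ζ, hζ, hp1, hpζ⟩
    exact ⟨⟨ζ, hζ, hpζ⟩, (hesc ζ hpζ).1 hp1⟩

end Paths

noncomputable def extensions (d k m : ℕ) (ξ : ℕ → Fin d → ℤ) : Finset (ℕ → Fin d → ℤ) :=
  ((SAWset_finite d m).inter_of_left (startSet d k ξ)).toFinset

lemma coe_extensions (d k m : ℕ) (ξ : ℕ → Fin d → ℤ) :
    (extensions d k m ξ : Set (ℕ → Fin d → ℤ)) = SAWset d m ∩ startSet d k ξ :=
  Set.Finite.coe_toFinset _

lemma card_extensions (d k m : ℕ) (ξ : ℕ → Fin d → ℤ) :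
    (extensions d k m ξ).card = cExt d m k ξ := by
  rw [cExt, ← coe_extensions, Nat.card_coe_set_eq, Set.ncard_coe_finset]

lemma mem_extensions {d k m : ℕ} {ξ ζ : ℕ → Fin d → ℤ} :
    ζ ∈ extensions d k m ξ ↔ ζ ∈ SAWset d m ∩ startSet d k ξ :=
  Set.Finite.mem_toFinset _

section Measure

variable {d k m : ℕ} {ξ : ℕ → Fin d → ℤ} {P Q : Measure (ℕ → Fin d → ℤ)}

lemma measurableSet_startSet (d m : ℕ) (ζ : ℕ → Fin d → ℤ) : MeasurableSet (startSet d m ζ) := by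
  unfold startSet; measurability

lemma measurableSet_escSet (d m : ℕ) (ζ : ℕ → Fin d → ℤ) : MeasurableSet (escSet d m ζ) := by
  unfold escSet; measurability

lemma measurableSet_InfSAW (d : ℕ) : MeasurableSet (InfSAW d) := by
  unfold InfSAW IsNbr Function.Injective; measurability

lemma measureReal_startSet_eq_sum [IsFiniteMeasure Q] (hQ : ∀ᵐ ω ∂Q, ω ∈ InfSAW d)
    (hkm : k ≤ m) :
    Q.real (startSet d k ξ) = ∑ ζ ∈ extensions d k m ξ, Q.real (startSet d m ζ) := by
  have hae : startSet d k ξ =ᵐ[Q] ⋃ ζ ∈ extensions d k m ξ, startSet d m ζ := by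
    refine eventuallyEq_set.2 (hQ.mono fun ω hω => ?_)
    simpa [← coe_extensions] using mem_startSet_iff_exists_SAW hω hkm
  rw [measureReal_congr hae, measureReal_biUnion_finset]
  · exact (pairwiseDisjoint_startSet d m).subset (by simp [coe_extensions])
  · exact fun ζ _ => measurableSet_startSet d m ζ

lemma measureReal_escapeEvent_eq_sum [IsFiniteMeasure P] [IsFiniteMeasure Q]
    (hQ : ∀ᵐ ω ∂Q, ω ∈ InfSAW d) (hkm : k ≤ m) :
    (P.prod Q).real (escapeEvent d k m ξ) =
      ∑ ζ ∈ extensions d k m ξ, P.real (escSet d m ζ) * Q.real (startSet d m ζ) := by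
  have hae : escapeEvent d k m ξ =ᵐ[P.prod Q]
      ⋃ ζ ∈ extensions d k m ξ, escSet d m ζ ×ˢ startSet d m ζ := by
    refine eventuallyEq_set.2 ((Measure.quasiMeasurePreserving_snd.ae hQ).mono fun p hp => ?_)
    rw [mem_escapeEvent_iff_exists_SAW hp hkm, ← coe_extensions]
    simp only [Set.mem_iUnion, Set.mem_prod, exists_prop, Finset.mem_coe]
  rw [measureReal_congr hae, measureReal_biUnion_finset]
  · simp only [measureReal_prod_prod]
  · refine fun ζ hζ ζ' hζ' hne => Set.disjoint_prod.2 (Or.inr ?_)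
    simp only [coe_extensions] at hζ hζ'
    exact pairwiseDisjoint_startSet d m hζ.1 hζ'.1 hne
  · exact fun ζ _ => (measurableSet_escSet d m ζ).prod (measurableSet_startSet d m ζ)

lemma measureReal_escapeEvent_eq_pow_mul_sum_sq [IsFiniteMeasure P]
    (hP : ∀ᵐ ω ∂P, ω ∈ InfSAW d) {μ : ℝ} (hμ : μ ≠ 0)
    (hdmp : ∀ ζ ∈ SAWset d m, P.real (startSet d m ζ) = μ⁻¹ ^ m * P.real (escSet d m ζ))
    (hkm : k ≤ m) :
    (P.prod P).real (escapeEvent d k m ξ) =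
      μ ^ m * ∑ ζ ∈ extensions d k m ξ, P.real (startSet d m ζ) ^ 2 := by
  rw [measureReal_escapeEvent_eq_sum hP hkm, Finset.mul_sum]
  refine Finset.sum_congr rfl fun ζ hζ => ?_
  have hesc : P.real (escSet d m ζ) = μ ^ m * P.real (startSet d m ζ) := by
    rw [hdmp ζ (mem_extensions.1 hζ).1, ← mul_assoc, ← mul_pow,
      mul_inv_cancel₀ hμ, one_pow, one_mul]
  rw [hesc]
  ring

lemma pow_mul_div_cExt_le [IsFiniteMeasure P] (hP : ∀ᵐ ω ∂P, ω ∈ InfSAW d) {μ : ℝ} (hμ : 0 < μ)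
    (hdmp : ∀ ζ ∈ SAWset d m, P.real (startSet d m ζ) = μ⁻¹ ^ m * P.real (escSet d m ζ))
    (hkm : k ≤ m) (hpos : 0 < P.real (startSet d k ξ)) :
    μ ^ m * P.real (startSet d k ξ) / cExt d m k ξ ≤
      (P.prod P).real (escapeEvent d k m ξ) / P.real (startSet d k ξ) := by
  have hjensen : P.real (startSet d k ξ) ^ 2 / cExt d m k ξ ≤
      ∑ ζ ∈ extensions d k m ξ, P.real (startSet d m ζ) ^ 2 := by
    rw [← card_extensions, measureReal_startSet_eq_sum hP hkm]
    simpa using pow_sum_div_card_le_sum_pow (fun ζ _ => measureReal_nonneg) 1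
  calc μ ^ m * P.real (startSet d k ξ) / cExt d m k ξ
        = μ ^ m * (P.real (startSet d k ξ) ^ 2 / cExt d m k ξ) / P.real (startSet d k ξ) := by
        field_simp
    _ ≤ μ ^ m * (∑ ζ ∈ extensions d k m ξ, P.real (startSet d m ζ) ^ 2) /
          P.real (startSet d k ξ) := by gcongr
    _ = _ := by rw [measureReal_escapeEvent_eq_pow_mul_sum_sq hP hμ.ne' hdmp hkm]

end Measure

lemma sq_finsum_mem_le_finsum_mem_sq_mul_card {α R : Type*} [CommRing R] [LinearOrder R]
    [IsStrictOrderedRing R] {s : Set α} (hs : s.Finite) (f : α → R) :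
    (∑ᶠ x ∈ s, f x) ^ 2 ≤ (∑ᶠ x ∈ s, f x ^ 2) * Nat.card s := by
  rw [finsum_mem_eq_finite_toFinset_sum _ hs, finsum_mem_eq_finite_toFinset_sum _ hs,
    Nat.card_coe_set_eq, Set.ncard_eq_toFinset_card s hs, mul_comm]
  exact sq_sum_le_card_mul_sum_sq

lemma tendsto_div_of_tendsto_div_of_tendsto_div_one {α : Type*} {l : Filter α} {a b c : α → ℝ}
    {p : ℝ} (hp : p ≠ 0) (hab : Tendsto (fun n => a n / b n) l (𝓝 p))
    (hbc : Tendsto (fun n => b n / c n) l (𝓝 1)) :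
    Tendsto (fun n => c n / a n) l (𝓝 p⁻¹) := by
  have h := (hab.mul hbc).inv₀ (by simpa using hp)
  rw [mul_one] at h
  refine h.congr' ?_
  filter_upwards [hbc.eventually_ne one_ne_zero] with n hn
  rw [div_mul_div_cancel₀ (div_ne_zero_iff.1 hn).1, inv_div]

lemma tendsto_pow_mul_div_cExt {d k : ℕ} {ξ : ℕ → Fin d → ℤ} {A μ p : ℝ} (hA : A ≠ 0) (hp : p ≠ 0)
    (hweak : Tendsto (fun n => (cExt d n k ξ : ℝ) / cSAW d n) atTop (𝓝 p))
    (hasymp : Tendsto (fun n => (cSAW d n : ℝ) / (A * μ ^ n)) atTop (𝓝 1)) :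
    Tendsto (fun n => μ ^ n * p / cExt d n k ξ) atTop (𝓝 A⁻¹) := by
  have h := (tendsto_div_of_tendsto_div_of_tendsto_div_one hp hweak hasymp).const_mul (p / A)
  convert h using 1
  · ext n
    field_simp
  · field_simp

/-- conditional escape lower bound via Jensen. For independent infinite
SAWs `η′₁, η′₂`, `liminf_m P(η′₁ escapes η′₂[0,m] | η′₂[0,k] = ξ) ≥ A⁻¹`, together with
the key Cauchy–Schwarz/Jensen inequality
`Σ_{ζ ⪰ ξ} P(η[0,m]=ζ)² ≥ (Σ_{ζ ⪰ ξ} P(η[0,m]=ζ))² / c_m(ξ)`. -/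
theorem conditional_escape_liminf (d : ℕ) (P : Measure (ℕ → Fin d → ℤ))
    [IsProbabilityMeasure P] (hsupp : P (InfSAW d) = 1)
    (A μ : ℝ) (hA : 0 < A) (hμ : 0 < μ)
    (hdmp : ∀ m (ζ : ℕ → Fin d → ℤ), ζ ∈ SAWset d m →
      (P (startSet d m ζ)).toReal = μ⁻¹ ^ m * (P (escSet d m ζ)).toReal)
    (hasymp : Tendsto (fun n => (cSAW d n : ℝ) / (A * μ ^ n)) atTop (𝓝 1))
    (hweak : ∀ k (ζ : ℕ → Fin d → ℤ), ζ ∈ SAWset d k →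
      Tendsto (fun n => (cExt d n k ζ : ℝ) / (cSAW d n)) atTop
        (𝓝 ((P (startSet d k ζ)).toReal)))
    (k : ℕ) (ξ : ℕ → Fin d → ℤ) (hξ : ξ ∈ SAWset d k)
    (hpos : 0 < (P (startSet d k ξ)).toReal) :
    A⁻¹ ≤ atTop.liminf (fun m : ℕ =>
        ((P.prod P) {p : (ℕ → Fin d → ℤ) × (ℕ → Fin d → ℤ) |
            p.2 ∈ startSet d k ξ ∧
            ∀ i, 1 ≤ i → ∀ j ≤ m, p.1 i + p.2 m ≠ p.2 j}).toReal /
          (P (startSet d k ξ)).toReal) ∧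
    ∀ m, k ≤ m →
      (∑ᶠ ζ ∈ (SAWset d m ∩ startSet d k ξ), (P (startSet d m ζ)).toReal) ^ 2
        ≤ (∑ᶠ ζ ∈ (SAWset d m ∩ startSet d k ξ), (P (startSet d m ζ)).toReal ^ 2) *
            (cExt d m k ξ : ℝ) := by
  have hP : ∀ᵐ ω ∂P, ω ∈ InfSAW d :=
    (ae_mem_iff_measure_eq (measurableSet_InfSAW d).nullMeasurableSet).2
      (by rw [hsupp, measure_univ])
  refine ⟨?_, fun m _ =>
    sq_finsum_mem_le_finsum_mem_sq_mul_card ((SAWset_finite d m).inter_of_left _) _⟩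
  have hlim := tendsto_pow_mul_div_cExt hA.ne' hpos.ne' (hweak k ξ hξ) hasymp
  have hbdd : ∀ m, (P.prod P).real (escapeEvent d k m ξ) / P.real (startSet d k ξ) ≤
      1 / P.real (startSet d k ξ) := fun m =>
    div_le_div_of_nonneg_right measureReal_le_one hpos.le
  calc A⁻¹ = atTop.liminf (fun m => μ ^ m * P.real (startSet d k ξ) / cExt d m k ξ) :=
        hlim.liminf_eq.symm
    _ ≤ _ := liminf_le_liminf
        ((eventually_ge_atTop k).mono fun m hkm =>
          pow_mul_div_cExt_le hP hμ (hdmp m) hkm hpos)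
        hlim.isBoundedUnder_ge (isCoboundedUnder_ge_of_le atTop hbdd)
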